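/- arXiv:2301.12014 — 2 statements merged into one kernel-verified Lean document; each statement's English description precedes it below -/
import Mathlib

section
/- Let T be a well-founded tree and (n_i)_{i<ω} a strictly increasing sequence of natural numbers. Then ω(ρ(T)) ≤ ρ(T|(n_i)) ≤ ρ(T). In particular, if ρ(T) is a limit ordinal, then ρ(T|(n_i)) = ρ(T). -/
noncomputable section

/-- `omegaPart a` is ω(a): the largest limit ordinal `≤ a`, or `0` if there is none. -/
def omegaPart (a : Ordinal) : Ordinal :=
  sSup {b : Ordinal | (b = 0 ∨ Order.IsSuccLimit b) ∧ b ≤ a}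

/-- `IsTree lt` says that the binary relation `lt` on `T` is a tree order: it is irreflexive,
transitive, and the set of predecessors of any node is finite and linearly ordered. -/
def IsTree {T : Type*} (lt : T → T → Prop) : Prop :=
  (∀ s, ¬ lt s s) ∧
  (∀ s t u, lt s t → lt t u → lt s u) ∧
  (∀ s, {t | lt t s}.Finite) ∧
  (∀ s t u, lt t s → lt u s → t = u ∨ lt t u ∨ lt u t)

/-- The length `lh s` of a node of a tree: the number of its strict predecessors. -/
def lh {T : Type*} (lt : T → T → Prop) (s : T) : ℕ :=
  Nat.card {t | lt t s}

/-- The rank `ρ(T)` of a tree `(T, lt)`: for a well-founded tree it is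
`sup { ρ_T(s) + 1 : s ∈ T }` where `ρ_T(s) = sup { ρ_T(t) + 1 : s < t }`;
for an ill-founded tree we use the junk value `0`. -/
def rhoRel {T : Type u} (lt : T → T → Prop) : Ordinal.{u} :=
  letI := Classical.dec (WellFounded (Function.swap lt))
  if h : WellFounded (Function.swap lt) then ⨆ s : T, Order.succ (h.apply s).rank else 0

/-- The nodes of the tree `T_ℰ^X` associated to a sequence `E` of (equivalence) relations
on `X`: pairs `(n, C)` where `C` is a non-singleton class `[x]_{E n}`. -/
def TreeNode (X : Type u) (E : ℕ → X → X → Prop) : Type u :=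
  {p : ℕ × Set X // ∃ x : X, p.2 = {y | E p.1 x y} ∧ p.2 ≠ {x}}

/-- The tree order on `T_ℰ^X`: `(n, C) < (m, D)` iff `n < m` and `C ⊇ D`. -/
def nodeLT {X : Type u} (E : ℕ → X → X → Prop) :
    TreeNode X E → TreeNode X E → Prop :=
  fun s t => s.1.1 < t.1.1 ∧ t.1.2 ⊆ s.1.2

/-- The tree `T_ℰ^X` is well-founded: no infinite strictly increasing sequence. -/
def TreeWF (X : Type u) (E : ℕ → X → X → Prop) : Prop :=
  WellFounded (Function.swap (nodeLT E))

/-- The rank `ρ(T_ℰ^X)`. -/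
def treeRho (X : Type u) (E : ℕ → X → X → Prop) : Ordinal.{u} :=
  rhoRel (nodeLT E)

/-- A Polish group: a topological group whose topology is Polish. -/
def IsPolishGroup (G : Type u) [Group G] [TopologicalSpace G] : Prop :=
  IsTopologicalGroup G ∧ PolishSpace G

/-- A topological group is non-archimedean if the open subgroups form a
neighborhood base of the identity. -/
def IsNonArch (G : Type u) [Group G] [TopologicalSpace G] : Prop :=
  ∀ U ∈ nhds (1 : G), ∃ H : Subgroup G, IsOpen (H : Set G) ∧ (H : Set G) ⊆ U

/-- A topological group is CLI if it admits a compatible complete left-invariant metric. -/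
def IsCLI (G : Type u) [Group G] [TopologicalSpace G] : Prop :=
  ∃ m : MetricSpace G,
    m.toUniformSpace.toTopologicalSpace = ‹TopologicalSpace G› ∧
    @CompleteSpace G m.toUniformSpace ∧
    ∀ g h k : G, m.dist (g * h) (g * k) = m.dist h k

/-- A topological group is TSI if it admits a compatible complete two-sided-invariant metric. -/
def IsTSI (G : Type u) [Group G] [TopologicalSpace G] : Prop :=
  ∃ m : MetricSpace G,
    m.toUniformSpace.toTopologicalSpace = ‹TopologicalSpace G› ∧
    @CompleteSpace G m.toUniformSpace ∧
    ∀ g h k : G, m.dist (g * h) (g * k) = m.dist h k ∧ m.dist (h * g) (k * g) = m.dist h k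

/-- `Dgnb G` is the set `dgnb(G)`: decreasing sequences `(G_n)` of open subgroups of `G`
with `G_0 = G` forming a neighborhood base of `1_G`. -/
structure Dgnb (G : Type u) [Group G] [TopologicalSpace G] where
  seq : ℕ → Subgroup G
  isOpen : ∀ n, IsOpen ((seq n : Set G))
  antitone : ∀ n, seq (n + 1) ≤ seq n
  zero_eq_top : seq 0 = ⊤
  basis : ∀ U ∈ nhds (1 : G), ∃ n, ((seq n : Set G)) ⊆ U

/-- The orbit equivalence relation of (the action of) a subgroup `H ≤ G` on a `G`-space `X`:
`x ∼ y` iff `g • x = y` for some `g ∈ H`. -/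
def subOrbit {G : Type u} [Group G] (H : Subgroup G) (X : Type v) [MulAction G X] :
    X → X → Prop :=
  fun x y => ∃ g ∈ H, g • x = y

/-- The tree `T_𝒢^X` of a `𝒢 ∈ dgnb(G)` and a `G`-space `X`: nodes are pairs `(n, C)`
with `C` a non-singleton `G_n`-orbit. We record it by its defining sequence of relations. -/
def dgnbRel {G : Type u} [Group G] [TopologicalSpace G] (𝒢 : Dgnb G) (X : Type v)
    [MulAction G X] : ℕ → X → X → Prop :=
  fun n => subOrbit (𝒢.seq n) X

/-- `ρ^k(𝒢) = ρ(T_𝒢^{G/G_k})`, where `G` acts by left translation on `G/G_k`. -/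
def rhoK {G : Type u} [Group G] [TopologicalSpace G] (𝒢 : Dgnb G) (k : ℕ) : Ordinal.{u} :=
  treeRho (G ⧸ 𝒢.seq k) (dgnbRel 𝒢 (G ⧸ 𝒢.seq k))

/-- `ρ(𝒢) = ρ(T_𝒢^{X(𝒢)})` where `X(𝒢) = ⊔_k G/G_k` is the disjoint union of the coset
spaces, with `G` acting by left translation on each summand. -/
def rhoDgnb {G : Type u} [Group G] [TopologicalSpace G] (𝒢 : Dgnb G) : Ordinal.{u} :=
  treeRho (Σ k : ℕ, G ⧸ 𝒢.seq k)
    (fun n p q => ∃ g ∈ 𝒢.seq n, q = ⟨p.1, g • p.2⟩)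

/-- `G` is α-CLI if `ρ(𝒢) ≤ ω·α` for any (equivalently, some) `𝒢 ∈ dgnb(G)`. -/
def IsAlphaCLI (G : Type u) [Group G] [TopologicalSpace G] (α : Ordinal.{u}) : Prop :=
  ∀ 𝒢 : Dgnb G, rhoDgnb 𝒢 ≤ Ordinal.omega0 * α

/-- `G` is L-α-CLI if `rank(G) ≤ α`, i.e. `ω(ρ(𝒢)) ≤ ω·α` for any (equivalently, some)
`𝒢 ∈ dgnb(G)`. -/
def IsLAlphaCLI (G : Type u) [Group G] [TopologicalSpace G] (α : Ordinal.{u}) : Prop :=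
  ∀ 𝒢 : Dgnb G, omegaPart (rhoDgnb 𝒢) ≤ Ordinal.omega0 * α

/-!
The inequality `ρ(S) ≤ ρ(T)` for the level subtree `S` holds for any restriction of the order.
For the other one, let `σ(u)` be the rank of the part of `S` at or above `u ∈ T`. Only finitely
many levels of `T` lie between two consecutive chosen levels, so a long chain of `T` above `u`
crosses many levels of `S`: if `ρ_T(u) ≥ ω·δ + N` with `N` large, some `w ≥ u` with
`ρ_T(w) ≥ ω·δ` lies `N` levels higher, and the nodes of `S` between `u` and `w` form a chain on
top of which `σ(w)` sits. By induction on `α`, `ρ_T(u) ≥ ω·α` then forces `σ(u) ≥ ω·α`, and the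
same argument started at level `0` gives `ω·α ≤ ρ(T) → ω·α ≤ ρ(S)`; every limit ordinal is of
the form `ω·α`.
-/

open Function Order Ordinal

theorem Ordinal.omega0_mul_add_natCast_lt {δ α : Ordinal} (h : δ < α) (N : ℕ) :
    ω * δ + N < ω * α :=
  calc ω * δ + N < ω * δ + ω := add_lt_add_right (natCast_lt_omega0 N) _
    _ = ω * succ δ := (mul_succ ω δ).symm
    _ ≤ ω * α := mul_le_mul_right (succ_le_of_lt h) _

theorem Ordinal.omega0_mul_le_of_forall_add_natCast_lt {α x : Ordinal}
    (h : ∀ δ < α, ∀ j : ℕ, ω * δ + j < x) : ω * α ≤ x := by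
  refine le_of_forall_lt fun γ hγ => ?_
  obtain ⟨j, hj⟩ := lt_omega0.1 (mod_lt γ omega0_ne_zero)
  rw [← div_add_mod γ ω, hj]
  exact h _ ((lt_mul_iff_div_lt omega0_ne_zero).1 hγ) j

theorem omegaPart_le_of_forall_omega0_mul_le {a x : Ordinal} (h : ∀ α, ω * α ≤ a → ω * α ≤ x) :
    omegaPart a ≤ x := by
  refine csSup_le ⟨0, Or.inl rfl, zero_le⟩ fun b ⟨hb, hba⟩ => ?_
  have hprelim : IsSuccPrelimit b := hb.elim (· ▸ isSuccPrelimit_bot) IsSuccLimit.isSuccPrelimit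
  obtain ⟨α, rfl⟩ := isSuccPrelimit_iff_omega0_dvd.1 hprelim
  exact h α hba

theorem omegaPart_eq_self_of_isSuccLimit {a : Ordinal} (ha : IsSuccLimit a) : omegaPart a = a :=
  le_antisymm (csSup_le ⟨0, Or.inl rfl, zero_le⟩ fun _ hb => hb.2)
    (le_csSup ⟨a, fun _ hb => hb.2⟩ ⟨Or.inr ha, le_rfl⟩)

section Rank

variable {T : Type*} {lt : T → T → Prop} (hwf : WellFounded (swap lt))

theorem rhoRel_eq_iSup : rhoRel lt = ⨆ s, succ (hwf.apply s).rank := by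
  rw [rhoRel, dif_pos hwf]

theorem exists_lt_le_rank_of_lt_rank {β : Ordinal} {u : T} (h : β < (hwf.apply u).rank) :
    ∃ w, lt u w ∧ β ≤ (hwf.apply w).rank := by
  rw [Acc.rank_eq, Ordinal.lt_iSup_iff] at h
  obtain ⟨⟨w, hw⟩, hβ⟩ := h
  exact ⟨w, hw, lt_succ_iff.1 hβ⟩

theorem rank_le_rank_subtype (p : T → Prop) (s : {x // p x}) :
    ((InvImage.wf Subtype.val hwf).apply s).rank ≤ (hwf.apply s.1).rank := by
  induction s using (InvImage.wf Subtype.val hwf).induction with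
  | _ s ih =>
    rw [Acc.rank_eq]
    exact Ordinal.iSup_le fun ⟨t, hst⟩ =>
      (succ_le_succ (ih t hst)).trans (succ_le_of_lt ((hwf.apply _).rank_lt_of_rel hst))

theorem rhoRel_subtype_le (hwf : WellFounded (swap lt)) (p : T → Prop) :
    rhoRel (fun s t : {x // p x} => lt s.1 t.1) ≤ rhoRel lt := by
  have hwfS : WellFounded (swap fun s t : {x // p x} => lt s.1 t.1) := InvImage.wf Subtype.val hwf
  rw [rhoRel_eq_iSup hwfS, rhoRel_eq_iSup hwf]
  exact Ordinal.iSup_le fun s => (succ_le_succ (rank_le_rank_subtype hwf p s)).trans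
    (Ordinal.le_iSup (fun t => succ (hwf.apply t).rank) s.1)

end Rank

namespace IsTree

variable {T : Type*} {lt : T → T → Prop}

theorem lh_lt_lh (htree : IsTree lt) {a b : T} (h : lt a b) : lh lt a < lh lt b :=
  Set.ncard_lt_ncard ⟨fun t ht => htree.2.1 t a b ht h, fun hba => htree.1 a (hba h)⟩
    (htree.2.2.1 b)

theorem eq_or_lt_of_lh_le (htree : IsTree lt) {a b w : T} (ha : lt a w) (hb : lt b w)
    (hab : lh lt a ≤ lh lt b) : a = b ∨ lt a b := by
  rcases htree.2.2.2 w a b ha hb with h | h | h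
  · exact Or.inl h
  · exact Or.inr h
  · exact absurd (htree.lh_lt_lh h) hab.not_gt

theorem lt_of_lh_lt (htree : IsTree lt) {a b w : T} (ha : lt a w) (hb : lt b w)
    (hab : lh lt a < lh lt b) : lt a b :=
  (htree.eq_or_lt_of_lh_le ha hb hab.le).resolve_left fun h => hab.ne (h ▸ rfl)

/-- The predecessors of `w` form a chain on which `lh` is injective with values below `lh w`;
counting shows that every such value is taken. -/
theorem exists_lt_lh_eq (htree : IsTree lt) (w : T) {ℓ : ℕ} (hℓ : ℓ < lh lt w) :
    ∃ v, lt v w ∧ lh lt v = ℓ := by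
  have hinj : Set.InjOn (lh lt) {t | lt t w} := fun a ha b hb hab =>
    (htree.eq_or_lt_of_lh_le ha hb hab.le).resolve_right fun h => (htree.lh_lt_lh h).ne hab
  have himage : lh lt '' {t | lt t w} = Set.Iio (lh lt w) := by
    refine Set.eq_of_subset_of_ncard_le ?_ ?_
    · rintro _ ⟨v, hv, rfl⟩
      exact htree.lh_lt_lh hv
    · rw [hinj.ncard_image, Set.ncard_Iio_nat]
      rfl
  rw [← Set.mem_Iio, ← himage] at hℓ
  exact hℓ

theorem exists_lt_lh_add_le_of_add_le_rank (htree : IsTree lt) (hwf : WellFounded (swap lt))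
    {β : Ordinal} (N : ℕ) {u : T} (h : β + N ≤ (hwf.apply u).rank) :
    ∃ w, (u = w ∨ lt u w) ∧ lh lt u + N ≤ lh lt w ∧ β ≤ (hwf.apply w).rank := by
  induction N generalizing u with
  | zero => exact ⟨u, Or.inl rfl, le_rfl, by simpa using h⟩
  | succ N ih =>
    have hlt : β + N < (hwf.apply u).rank := by
      rw [Nat.cast_succ, ← add_assoc, ← succ_eq_add_one] at h
      exact succ_le_iff.1 h
    obtain ⟨v, huv, hv⟩ := exists_lt_le_rank_of_lt_rank hwf hlt
    obtain ⟨w, hvw, hlh, hw⟩ := ih hv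
    have huw : lt u w := hvw.elim (· ▸ huv) (htree.2.1 u v w huv)
    exact ⟨w, Or.inr huw, by have := htree.lh_lt_lh huv; omega, hw⟩

end IsTree

section LevelSubtree

variable {T : Type*} {lt : T → T → Prop} {n : ℕ → ℕ}

abbrev LevelSubtree (lt : T → T → Prop) (n : ℕ → ℕ) : Type _ := {x : T // ∃ i, lh lt x = n i}

theorem LevelSubtree.wellFounded (hwf : WellFounded (swap lt)) :
    WellFounded (swap fun s t : LevelSubtree lt n => lt s.1 t.1) :=
  InvImage.wf Subtype.val hwf

def levelRank (hwf : WellFounded (swap lt)) (s : LevelSubtree lt n) : Ordinal :=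
  ((LevelSubtree.wellFounded hwf).apply s).rank

/-- `σ(u) = sup {ρ_S(s) + 1 : s ∈ S, u ≤ s}`, the rank of the part of `S` at or above `u ∈ T`. -/
def coneRank (hwf : WellFounded (swap lt)) (n : ℕ → ℕ) (u : T) : Ordinal :=
  ⨆ s : {s : LevelSubtree lt n // u = s.1 ∨ lt u s.1}, succ (levelRank hwf s.1)

variable (hwf : WellFounded (swap lt))

theorem levelRank_lt_levelRank {s t : LevelSubtree lt n} (h : lt s.1 t.1) :
    levelRank hwf t < levelRank hwf s :=
  Acc.rank_lt_of_rel ((LevelSubtree.wellFounded hwf).apply s) h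

theorem levelRank_lt_coneRank {u : T} {s : LevelSubtree lt n} (h : u = s.1 ∨ lt u s.1) :
    levelRank hwf s < coneRank hwf n u :=
  (lt_succ _).trans_le (Ordinal.le_iSup (fun t : {t : LevelSubtree lt n // u = t.1 ∨ lt u t.1} =>
    succ (levelRank hwf t.1)) ⟨s, h⟩)

theorem coneRank_le_levelRank (htree : IsTree lt) {w : T} {s : LevelSubtree lt n}
    (h : lt s.1 w) : coneRank hwf n w ≤ levelRank hwf s :=
  Ordinal.iSup_le fun ⟨_, ht⟩ => succ_le_of_lt <| levelRank_lt_levelRank hwf <|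
    ht.elim (· ▸ h) (htree.2.1 _ _ _ h)

theorem rhoRel_levelSubtree_eq_iSup :
    rhoRel (fun s t : LevelSubtree lt n => lt s.1 t.1) =
      ⨆ s : LevelSubtree lt n, succ (levelRank hwf s) :=
  rhoRel_eq_iSup (LevelSubtree.wellFounded hwf)

theorem exists_levelRank_ge_coneRank_add (htree : IsTree lt) (hn : StrictMono n) (d : ℕ) :
    ∀ {a : ℕ} {w : T}, n (a + d) < lh lt w → ∃ v : LevelSubtree lt n,
      lt v.1 w ∧ lh lt v.1 = n a ∧ coneRank hwf n w + d ≤ levelRank hwf v := by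
  induction d with
  | zero =>
    intro a w h
    obtain ⟨v, hvw, hv⟩ := htree.exists_lt_lh_eq w h
    exact ⟨⟨v, a, hv⟩, hvw, hv, by simpa using coneRank_le_levelRank hwf htree hvw⟩
  | succ d ih =>
    intro a w h
    obtain ⟨v', hv'w, hv', hrank⟩ := ih (a := a + 1) (by rwa [add_right_comm, add_assoc])
    obtain ⟨v, hvw, hv⟩ :=
      htree.exists_lt_lh_eq w ((hn.monotone (Nat.le_add_right a (d + 1))).trans_lt h)
    have hvv' : lt v v'.1 := htree.lt_of_lh_lt hvw hv'w (hv ▸ hv' ▸ hn (lt_add_one a))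
    refine ⟨⟨v, a, hv⟩, hvw, hv, ?_⟩
    calc coneRank hwf n w + (d + 1 : ℕ) = succ (coneRank hwf n w + d) := by
          rw [Nat.cast_succ, ← add_assoc, succ_eq_add_one]
      _ ≤ succ (levelRank hwf v') := succ_le_succ hrank
      _ ≤ levelRank hwf ⟨v, a, hv⟩ := succ_le_of_lt (levelRank_lt_levelRank hwf hvv')

/-- A `T`-chain of length `n (a + j) + 1` above `u` crosses the levels `n a, …, n (a + j)` of `S`;
`hδ` is the induction hypothesis of `omega0_mul_le_coneRank`. -/
theorem exists_add_natCast_le_levelRank (htree : IsTree lt) (hn : StrictMono n) {δ : Ordinal}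
    (hδ : ∀ w, ω * δ ≤ (hwf.apply w).rank → ω * δ ≤ coneRank hwf n w) (a j : ℕ) {u : T}
    (hu : ω * δ + (n (a + j) + 1 : ℕ) ≤ (hwf.apply u).rank) :
    ∃ v : LevelSubtree lt n,
      (lh lt u ≤ n a → u = v.1 ∨ lt u v.1) ∧ ω * δ + j ≤ levelRank hwf v := by
  obtain ⟨w, huw, hlh, hw⟩ := htree.exists_lt_lh_add_le_of_add_le_rank hwf _ hu
  obtain ⟨v, hvw, hv, hrank⟩ :=
    exists_levelRank_ge_coneRank_add hwf htree hn j (a := a) (w := w) (by omega)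
  refine ⟨v, fun hua => ?_, (add_le_add_left (hδ w hw) _).trans hrank⟩
  rcases huw with rfl | huw
  · exact absurd (htree.lh_lt_lh hvw) (by omega)
  · exact htree.eq_or_lt_of_lh_le huw hvw (hv ▸ hua)

theorem omega0_mul_le_coneRank (htree : IsTree lt) (hn : StrictMono n) (α : Ordinal) :
    ∀ u, ω * α ≤ (hwf.apply u).rank → ω * α ≤ coneRank hwf n u := by
  induction α using WellFoundedLT.induction with
  | _ α ih =>
    intro u hu
    refine omega0_mul_le_of_forall_add_natCast_lt fun δ hδ j => ?_
    obtain ⟨v, huv, hv⟩ := exists_add_natCast_le_levelRank hwf htree hn (ih δ hδ) (lh lt u) j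
      ((omega0_mul_add_natCast_lt hδ _).le.trans hu)
    exact hv.trans_lt (levelRank_lt_coneRank hwf (huv hn.le_apply))

theorem omega0_mul_le_rhoRel_levelSubtree (htree : IsTree lt) (hwf : WellFounded (swap lt))
    (hn : StrictMono n) {α : Ordinal}
    (h : ω * α ≤ rhoRel lt) : ω * α ≤ rhoRel (fun s t : LevelSubtree lt n => lt s.1 t.1) := by
  rw [rhoRel_eq_iSup hwf] at h
  rw [rhoRel_levelSubtree_eq_iSup hwf]
  refine omega0_mul_le_of_forall_add_natCast_lt fun δ hδ j => ?_
  obtain ⟨u, hu⟩ :=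
    Ordinal.lt_iSup_iff.1 ((omega0_mul_add_natCast_lt hδ (n (0 + j) + 1)).trans_le h)
  obtain ⟨v, -, hv⟩ := exists_add_natCast_le_levelRank hwf htree hn
    (omega0_mul_le_coneRank hwf htree hn δ) 0 j (lt_succ_iff.1 hu)
  exact hv.trans_lt ((lt_succ _).trans_le (Ordinal.le_iSup _ v))

end LevelSubtree

theorem statement_13 (T : Type) (lt : T → T → Prop) (htree : IsTree lt)
    (hwf : WellFounded (Function.swap lt)) (n : ℕ → ℕ) (hmono : StrictMono n) :
    omegaPart (rhoRel lt) ≤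
        rhoRel (fun s t : {x : T // ∃ i, lh lt x = n i} => lt s.1 t.1) ∧
    rhoRel (fun s t : {x : T // ∃ i, lh lt x = n i} => lt s.1 t.1) ≤ rhoRel lt ∧
    (Order.IsSuccLimit (rhoRel lt) →
      rhoRel (fun s t : {x : T // ∃ i, lh lt x = n i} => lt s.1 t.1) = rhoRel lt) := by
  have hle : rhoRel (fun s t : LevelSubtree lt n => lt s.1 t.1) ≤ rhoRel lt :=
    rhoRel_subtype_le hwf _
  have hge : omegaPart (rhoRel lt) ≤ rhoRel (fun s t : LevelSubtree lt n => lt s.1 t.1) :=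
    omegaPart_le_of_forall_omega0_mul_le fun _ => omega0_mul_le_rhoRel_levelSubtree htree hwf hmono
  exact ⟨hge, hle, fun hlim => le_antisymm hle (omegaPart_eq_self_of_isSuccLimit hlim ▸ hge)⟩
end
end

section
/- Let X and Y be sets, let ℰ = (E_n) and ℱ = (F_n) be decreasing sequences of equivalence relations on X and Y respectively, and let θ: X → Y be a surjection such that θ([x]_{E_n}) = [θ(x)]_{F_n} for all n < ω and x ∈ X. Then there exists a Lipschitz order preserving embedding ψ: T_ℱ^Y → T_ℰ^X. In particular, if T_ℰ^X is well-founded, then so is T_ℱ^Y, and ρ(T_ℱ^Y) ≤ ρ(T_ℰ^X). -/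
noncomputable section

/-! By recursion on `n`, pick for every `F n`-class `[y]` a point `g n y ∈ X` lying over it, with
`g (n + 1) y ∈ [g n y]_{E n}`; this is possible because `θ` maps `[x]_{E n}` onto
`[θ x]_{F n}`. Then `ψ (n, [y]_{F n}) = (n, [g n y]_{E n})` is well defined, `θ` maps the class of
`ψ s` onto that of `s`, and the chain condition makes `ψ` monotone. Since the length of a node is
its level, `ψ` is Lipschitz, and a strictly monotone map into a well-founded tree does not
decrease ranks. -/

open Function

section Rank

variable {α β : Type u} {r : α → α → Prop} {s : β → β → Prop}

theorem Acc.rank_le_of_map (f : α → β) (hf : ∀ a b, r a b → s (f a) (f b)) {a : α}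
    (ha : Acc r a) (hfa : Acc s (f a)) : ha.rank ≤ hfa.rank := by
  induction ha with
  | intro a _ ih =>
    rw [Acc.rank_eq]
    refine Ordinal.iSup_le fun ⟨b, hba⟩ => Order.succ_le_of_lt ?_
    exact (ih b hba (hfa.inv (hf b a hba))).trans_lt (hfa.rank_lt_of_rel (hf b a hba))

theorem rhoRel_le_of_map (f : α → β) (hf : ∀ a b, r a b → s (f a) (f b))
    (hs : WellFounded (swap s)) : rhoRel r ≤ rhoRel s := by
  have hr : WellFounded (swap r) :=
    RelHomClass.wellFounded (⟨f, hf _ _⟩ : swap r →r swap s) hs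
  unfold rhoRel
  rw [dif_pos hr, dif_pos hs]
  refine Ordinal.iSup_le fun a => ?_
  exact (Order.succ_le_succ (Acc.rank_le_of_map f (fun a b h => hf b a h) _ _)).trans
    (Ordinal.le_iSup (fun b => Order.succ (hs.apply b).rank) (f a))

end Rank

section Tree

variable {X : Type u} {E : ℕ → X → X → Prop}

theorem rel_of_le (hEdec : ∀ n x y, E (n + 1) x y → E n x y) {k n : ℕ} (hkn : k ≤ n)
    {x y : X} (h : E n x y) : E k x y :=
  antitone_nat_of_succ_le (f := E) (fun n => hEdec n) hkn x y h

theorem rel_of_le_of_succ (hE : ∀ n, Equivalence (E n))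
    (hEdec : ∀ n x y, E (n + 1) x y → E n x y) {g : ℕ → X}
    (hg : ∀ n, E n (g n) (g (n + 1))) {n m : ℕ} (hnm : n ≤ m) : E n (g n) (g m) := by
  induction m, hnm using Nat.le_induction with
  | base => exact (hE n).refl _
  | succ m hnm ih => exact (hE n).trans ih (rel_of_le hEdec hnm (hg m))

theorem setOf_rel_eq_of_rel {R : X → X → Prop} (hR : Equivalence R) {x y : X} (h : R x y) :
    {z | R x z} = {z | R y z} :=
  Set.ext fun _ => ⟨hR.trans (hR.symm h), hR.trans h⟩

theorem setOf_rel_ne_singleton_of_le (hE : ∀ n, Equivalence (E n))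
    (hEdec : ∀ n x y, E (n + 1) x y → E n x y) {k n : ℕ} (hkn : k ≤ n) {x : X}
    (hne : {y | E n x y} ≠ {x}) : {y | E k x y} ≠ {x} := fun hk =>
  hne <| Set.Subset.antisymm (fun _ hy => hk ▸ rel_of_le hEdec hkn hy)
    (Set.singleton_subset_iff.2 ((hE n).refl x))

/-- The predecessors of a node `(n, [x]_{E n})` are the nodes `(k, [x]_{E k})`, `k < n`. -/
theorem lh_nodeLT (hE : ∀ n, Equivalence (E n)) (hEdec : ∀ n x y, E (n + 1) x y → E n x y)
    (s : TreeNode X E) : lh (nodeLT E) s = s.1.1 := by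
  obtain ⟨⟨n, C⟩, x, hC, hne⟩ := s
  dsimp only at hC hne ⊢
  subst hC
  let ι : Fin n → TreeNode X E := fun k =>
    ⟨(k, {y | E k x y}), x, rfl, setOf_rel_ne_singleton_of_le hE hEdec k.2.le hne⟩
  have hι : Injective ι := fun k l h => Fin.ext (congrArg (fun t => t.1.1) h)
  suffices {t | nodeLT E t ⟨(n, {y | E n x y}), x, rfl, hne⟩} = Set.range ι by
    unfold lh
    rw [this, Nat.card_range_of_injective hι, Nat.card_eq_fintype_card, Fintype.card_fin]
  ext ⟨⟨k, D⟩, x', hD, _⟩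
  constructor
  · rintro ⟨hk, hsub⟩
    dsimp only at hk hsub hD
    subst hD
    refine ⟨⟨k, hk⟩, Subtype.ext (Prod.ext rfl ?_)⟩
    exact (setOf_rel_eq_of_rel (hE k) (hsub ((hE n).refl x))).symm
  · rintro ⟨k, hk⟩
    rw [← hk]
    exact ⟨k.2, fun _ hy => rel_of_le hEdec k.2.le hy⟩

end Tree

section Lift

variable {X : Type u} {Y : Type v} {E : ℕ → X → X → Prop} {F : ℕ → Y → Y → Prop} {θ : X → Y}

theorem exists_coherent_lift (hF : ∀ n, Equivalence (F n))
    (hFdec : ∀ n x y, F (n + 1) x y → F n x y) (hsurj : Surjective θ)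
    (hclass : ∀ n x, θ '' {y | E n x y} = {y | F n (θ x) y}) :
    ∃ g : ℕ → Y → X, (∀ n y y', F n y y' → g n y = g n y') ∧
      (∀ n y, F n y (θ (g n y))) ∧ ∀ n y, E n (g n y) (g (n + 1) y) := by
  choose σ hσ using hsurj
  have hlift : ∀ n a r, ∃ x, F n (θ a) r → E n a x ∧ θ x = r := by
    intro n a r
    by_cases h : F n (θ a) r
    · obtain ⟨x, hx, rfl⟩ : r ∈ θ '' {y | E n a y} := hclass n a ▸ h
      exact ⟨x, fun _ => ⟨hx, rfl⟩⟩
    · exact ⟨a, fun h' => absurd h' h⟩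
  choose lift hlift using hlift
  let S : ℕ → Setoid Y := fun n => ⟨F n, hF n⟩
  let rep : ℕ → Y → Y := fun n y => (Quotient.mk (S n) y).out
  have rep_rel : ∀ n y, F n (rep n y) y := fun n y => Quotient.mk_out (s := S n) y
  have rep_eq : ∀ n y y', F n y y' → rep n y = rep n y' := fun n y y' h =>
    congrArg Quotient.out (Quotient.sound (s := S n) h)
  have rep_succ : ∀ n y, F n (rep n y) (rep (n + 1) y) := fun n y =>
    (hF n).trans (rep_rel n y) ((hF n).symm (hFdec n _ _ (rep_rel (n + 1) y)))
  -- `g (n + 1) y` lies in `[g n y]_{E n}` over the representative of `[y]_{F (n + 1)}`; passing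
  -- through representatives makes `g n` constant on `F n`-classes.
  let g : ℕ → Y → X := fun n =>
    Nat.rec (σ ∘ rep 0) (fun n gn y => lift n (gn y) (rep (n + 1) y)) n
  have g_succ : ∀ n y, g (n + 1) y = lift n (g n y) (rep (n + 1) y) := fun _ _ => rfl
  have g_rep : ∀ n y, θ (g n y) = rep n y := by
    intro n
    induction n with
    | zero => exact fun y => hσ _
    | succ n ih => exact fun y => (hlift n _ _ (ih y ▸ rep_succ n y)).2
  refine ⟨g, fun n => ?_, fun n y => g_rep n y ▸ (hF n).symm (rep_rel n y),
    fun n y => (hlift n _ _ (g_rep n y ▸ rep_succ n y)).1⟩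
  induction n with
  | zero => exact fun y y' h => congrArg σ (rep_eq 0 y y' h)
  | succ n ih =>
    intro y y' h
    rw [g_succ, g_succ, ih y y' (hFdec n _ _ h), rep_eq (n + 1) y y' h]

theorem exists_levelwise_map (hE : ∀ n, Equivalence (E n)) (hF : ∀ n, Equivalence (F n))
    (hEdec : ∀ n x y, E (n + 1) x y → E n x y) (hFdec : ∀ n x y, F (n + 1) x y → F n x y)
    (hsurj : Surjective θ) (hclass : ∀ n x, θ '' {y | E n x y} = {y | F n (θ x) y}) :
    ∃ ψ : TreeNode Y F → TreeNode X E, (∀ s, (ψ s).1.1 = s.1.1) ∧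
      (∀ s, θ '' (ψ s).1.2 = s.1.2) ∧ ∀ s t, nodeLT F s t → nodeLT E (ψ s) (ψ t) := by
  obtain ⟨g, hg_eq, hg_rel, hg_succ⟩ := exists_coherent_lift hF hFdec hsurj hclass
  have himage : ∀ n y, θ '' {x | E n (g n y) x} = {y' | F n y y'} := fun n y => by
    rw [hclass, setOf_rel_eq_of_rel (hF n) (hg_rel n y)]
  have hne : ∀ n y, {y' | F n y y'} ≠ {y} → {x | E n (g n y) x} ≠ {g n y} := by
    intro n y hne hsingle
    have hclass_y : {y' | F n y y'} = {θ (g n y)} := by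
      rw [← himage, hsingle, Set.image_singleton]
    have hy : y ∈ ({θ (g n y)} : Set Y) := hclass_y ▸ (hF n).refl y
    exact hne (hclass_y.trans (congrArg _ hy.symm))
  choose y hy hyne using fun s : TreeNode Y F => s.2
  refine ⟨fun s => ⟨(s.1.1, {x | E s.1.1 (g s.1.1 (y s)) x}), _, rfl, hne _ _ (hy s ▸ hyne s)⟩,
    fun s => rfl, fun s => (himage _ _).trans (hy s).symm, ?_⟩
  rintro s t ⟨hlt, hsub⟩
  refine ⟨hlt, fun x hx => ?_⟩
  have hst : F s.1.1 (y s) (y t) := by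
    have hyt : y t ∈ s.1.2 := hsub (hy t ▸ (hF _).refl (y t))
    rwa [hy s] at hyt
  show E s.1.1 (g s.1.1 (y s)) x
  rw [hg_eq _ _ _ hst]
  exact (hE _).trans (rel_of_le_of_succ hE hEdec (fun n => hg_succ n (y t)) hlt.le)
    (rel_of_le hEdec hlt.le hx)

end Lift

theorem statement_15 (X Y : Type) (E : ℕ → X → X → Prop) (F : ℕ → Y → Y → Prop)
    (hE : ∀ n, Equivalence (E n)) (hF : ∀ n, Equivalence (F n))
    (hEdec : ∀ n x y, E (n + 1) x y → E n x y) (hFdec : ∀ n x y, F (n + 1) x y → F n x y)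
    (θ : X → Y) (hsurj : Function.Surjective θ)
    (hclass : ∀ (n : ℕ) (x : X), θ '' {y | E n x y} = {y | F n (θ x) y}) :
    ∃ ψ : TreeNode Y F → TreeNode X E,
      Function.Injective ψ ∧
      (∀ s t, nodeLT F s t ↔ nodeLT E (ψ s) (ψ t)) ∧
      (∀ s, lh (nodeLT E) (ψ s) = lh (nodeLT F) s) ∧
      (TreeWF X E → TreeWF Y F ∧ treeRho Y F ≤ treeRho X E) := by
  obtain ⟨ψ, hlevel, himage, hmono⟩ := exists_levelwise_map hE hF hEdec hFdec hsurj hclass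
  have hinj : Injective ψ := fun s t h => Subtype.ext <| Prod.ext
    (by rw [← hlevel s, ← hlevel t, h]) (by rw [← himage s, ← himage t, h])
  have hiff : ∀ s t, nodeLT F s t ↔ nodeLT E (ψ s) (ψ t) := fun s t =>
    ⟨hmono s t, fun ⟨hlt, hsub⟩ =>
      ⟨hlevel s ▸ hlevel t ▸ hlt, himage s ▸ himage t ▸ Set.image_mono hsub⟩⟩
  refine ⟨ψ, hinj, hiff, fun s => ?_, fun hwf => ⟨?_, rhoRel_le_of_map ψ hmono hwf⟩⟩
  · rw [lh_nodeLT hE hEdec, lh_nodeLT hF hFdec, hlevel]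
  · exact RelHomClass.wellFounded (⟨ψ, hmono _ _⟩ : swap (nodeLT F) →r swap (nodeLT E)) hwf

end
end
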